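/- Let F : ℝ → ℝ be a positive C² function on ℝ satisfying F'' ≥ 4F² on all of ℝ, and suppose F is bounded. Then F ≡ 0 (contradiction with positivity), i.e., no positive bounded C² function on ℝ satisfies F'' ≥ 4F² everywhere; consequently any nonnegative bounded C² solution of F'' ≥ 4F² on ℝ is identically zero. -/

import Mathlib

/-! `F'' ≥ 4F² ≥ 0` makes `F` convex, and a convex function on `ℝ` that is bounded above is
constant: writing `y = (1 - t) x + t z` with `z = x + t⁻¹ (y - x)`, convexity gives
`F y ≤ (1 - t) F x + t M`, and `t → 0⁺` yields `F y ≤ F x`. Then `F'' = 0`, so `4F² ≤ 0`. -/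

open Set Filter Topology

theorem ConvexOn.apply_eq_of_bddAbove {E : Type*} [AddCommGroup E] [Module ℝ E] {f : E → ℝ}
    (hf : ConvexOn ℝ univ f) (hb : BddAbove (range f)) (x y : E) : f x = f y := by
  obtain ⟨M, hM⟩ := hb
  have apply_le : ∀ x y, f y ≤ f x := by
    intro x y
    have hchord : ∀ t ∈ Ioo (0 : ℝ) 1, f y ≤ (1 - t) * f x + t * M := by
      rintro t ⟨ht0, ht1⟩
      set z := x + t⁻¹ • (y - x)
      have hy : (1 - t) • x + t • z = y := by
        simp only [z, smul_add, smul_smul, mul_inv_cancel₀ ht0.ne', one_smul, sub_smul]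
        abel
      calc f y = f ((1 - t) • x + t • z) := by rw [hy]
        _ ≤ (1 - t) • f x + t • f z :=
          hf.2 (mem_univ _) (mem_univ _) (by linarith) ht0.le (by ring)
        _ ≤ (1 - t) * f x + t * M := by
          rw [smul_eq_mul, smul_eq_mul]
          gcongr
          exact hM (mem_range_self z)
    have hlim : Tendsto (fun t : ℝ => (1 - t) * f x + t * M) (𝓝[>] 0) (𝓝 (f x)) := by
      have hcont : Continuous fun t : ℝ => (1 - t) * f x + t * M := by fun_prop
      simpa using (hcont.tendsto 0).mono_left nhdsWithin_le_nhds
    exact ge_of_tendsto hlim (eventually_of_mem (Ioo_mem_nhdsGT one_pos) hchord)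
  exact le_antisymm (apply_le y x) (apply_le x y)

theorem stmt_4_general (F : ℝ → ℝ) (hF : ContDiff ℝ 2 F)
    (hbdd : ∃ M : ℝ, ∀ x, F x ≤ M)
    (hineq : ∀ x, 4 * (F x) ^ 2 ≤ deriv (deriv F) x) :
    ∀ x, F x = 0 := by
  have hconvex : ConvexOn ℝ univ F :=
    convexOn_univ_of_deriv2_nonneg (hF.differentiable two_ne_zero) hF.differentiable_deriv_two
      fun x => (by positivity : (0 : ℝ) ≤ 4 * F x ^ 2).trans (hineq x)
  have hbdd_range : BddAbove (range F) := by
    obtain ⟨M, hM⟩ := hbdd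
    exact ⟨M, forall_mem_range.2 hM⟩
  have hconst : F = fun _ => F 0 := funext fun x => hconvex.apply_eq_of_bddAbove hbdd_range x 0
  have hF0 : F 0 = 0 := by
    have h := hineq 0
    rw [hconst] at h
    simp only [deriv_const', deriv_const] at h
    nlinarith [sq_nonneg (F 0)]
  intro x
  rw [congrFun hconst x, hF0]

/-- Any nonnegative bounded `C²` function `F : ℝ → ℝ` satisfying `F'' ≥ 4F²` on all of
`ℝ` is identically zero. -/
theorem stmt_4 (F : ℝ → ℝ) (hF : ContDiff ℝ 2 F) (hpos : ∀ x, 0 ≤ F x)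
    (hbdd : ∃ M : ℝ, ∀ x, F x ≤ M)
    (hineq : ∀ x, 4 * (F x) ^ 2 ≤ deriv (deriv F) x) :
    ∀ x, F x = 0 :=
  stmt_4_general F hF hbdd hineq
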